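/- Let χ, a, b, λ, μ > 0 (no relation between b and Nμχ/4 is assumed). Let u, v : ℝ^N × (0,∞) → ℝ be a classical solution of (KS) on ℝ^N × (0,∞) (u is C¹ in t and C² in x, both equations hold pointwise) such that in addition v is three times continuously differentiable in x, ∇v is continuously differentiable in t, and ∂_t ∇v = ∇ ∂_t v on ℝ^N × (0,∞). Set w(x,t) = u(x,t) + (χ/(2μ)) |∇v(x,t)|². Then for all x ∈ ℝ^N and t > 0: ∂_t w(x,t) ≤ Δw(x,t) − (χλ/μ) |∇v(x,t)|² − (b − Nμχ/4) u(x,t)² + a u(x,t). -/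

import Mathlib

/-!
Differentiating `w` in time and inserting both equations, the cross terms `χ ∇u·∇v` cancel, and
Bochner's identity `Δ|∇v|² = 2|D²v|² + 2 ∇v·∇Δv` turns `Δw − w_t` into
`(χλ/μ)|∇v|² + b u² − a u + (χ/μ)(|D²v|² + μ u Δv)`.
Cauchy–Schwarz on the diagonal of the Hessian gives `(Δv)² ≤ N |D²v|²`, and completing the square
then yields `|D²v|² + μ u Δv ≥ −N μ² u² / 4`.
-/

open Real Filter MeasureTheory RealInnerProductSpace

noncomputable section

/-- Euclidean space `ℝ^N`. -/
abbrev Eu (N : ℕ) := EuclideanSpace ℝ (Fin N)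

/-- First-order partial derivative in the `i`-th coordinate direction. -/
def pd {N : ℕ} (f : Eu N → ℝ) (i : Fin N) (x : Eu N) : ℝ :=
  fderiv ℝ f x (EuclideanSpace.single i 1)

/-- Second-order partial derivative `∂_{x_i x_j}`. -/
def pd2 {N : ℕ} (f : Eu N → ℝ) (i j : Fin N) (x : Eu N) : ℝ :=
  pd (fun y => pd f j y) i x

/-- Laplacian `Δf = Σ_i ∂²f/∂x_i²`. -/
def lap {N : ℕ} (f : Eu N → ℝ) (x : Eu N) : ℝ := ∑ i, pd2 f i i x

/-- Divergence `∇·F = Σ_i ∂F_i/∂x_i` of a vector field. -/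
def divg {N : ℕ} (F : Eu N → Eu N) (x : Eu N) : ℝ :=
  ∑ i, fderiv ℝ (fun y => F y i) x (EuclideanSpace.single i 1)

/-- `(u,v)` is a global classical solution of (KS) with initial data `(u₀,v₀)`:
continuous on `ℝ^N × [0,∞)`, once continuously differentiable in `t` and twice in `x`
for `t > 0`, satisfying both equations pointwise for `t > 0`. -/
structure IsClassicalSolution {N : ℕ} (χ a b lam mu : ℝ)
    (u v : Eu N → ℝ → ℝ) (u₀ v₀ : Eu N → ℝ) : Prop where
  contu : ContinuousOn (fun p : Eu N × ℝ => u p.1 p.2) {p : Eu N × ℝ | 0 ≤ p.2}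
  contv : ContinuousOn (fun p : Eu N × ℝ => v p.1 p.2) {p : Eu N × ℝ | 0 ≤ p.2}
  regu : ∀ t : ℝ, 0 < t → ContDiff ℝ 2 (fun x => u x t)
  regv : ∀ t : ℝ, 0 < t → ContDiff ℝ 2 (fun x => v x t)
  pdeu : ∀ (x : Eu N) (t : ℝ), 0 < t →
    HasDerivAt (fun s => u x s)
      (lap (fun y => u y t) x
        - χ * divg (fun y => u y t • gradient (fun z => v z t) y) x
        + u x t * (a - b * u x t)) t
  pdev : ∀ (x : Eu N) (t : ℝ), 0 < t →
    HasDerivAt (fun s => v x s)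
      (lap (fun y => v y t) x - lam * v x t + mu * u x t) t
  initu : ∀ x, u x 0 = u₀ x
  initv : ∀ x, v x 0 = v₀ x

/-- A solution is bounded on `ℝ^N × [0,∞)`. -/
def BoundedSol {N : ℕ} (u v : Eu N → ℝ → ℝ) : Prop :=
  ∃ C : ℝ, ∀ (x : Eu N) (t : ℝ), 0 ≤ t → |u x t| ≤ C ∧ |v x t| ≤ C

/-- A solution is nonnegative. -/
def NonnegSol {N : ℕ} (u v : Eu N → ℝ → ℝ) : Prop :=
  ∀ (x : Eu N) (t : ℝ), 0 ≤ t → 0 ≤ u x t ∧ 0 ≤ v x t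

/-- Membership in `X₁⁺`: bounded, uniformly continuous and nonnegative. -/
def MemX1plus {N : ℕ} (f : Eu N → ℝ) : Prop :=
  UniformContinuous f ∧ (∃ C, ∀ x, |f x| ≤ C) ∧ ∀ x, 0 ≤ f x

/-- Membership in `X₂⁺`: in `X₁⁺`, differentiable, and all first-order partial
derivatives are bounded and uniformly continuous. -/
def MemX2plus {N : ℕ} (f : Eu N → ℝ) : Prop :=
  MemX1plus f ∧ Differentiable ℝ f ∧
    ∀ i : Fin N, UniformContinuous (fun x => pd f i x) ∧ ∃ C, ∀ x, |pd f i x| ≤ C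

section Gradient

variable {F : Type*} [NormedAddCommGroup F] [InnerProductSpace ℝ F] [CompleteSpace F]
  {f g : F → ℝ} {x : F}

theorem gradient_fun_add (hf : DifferentiableAt ℝ f x) (hg : DifferentiableAt ℝ g x) :
    gradient (fun y => f y + g y) x = gradient f x + gradient g x := by
  simp [gradient, fderiv_fun_add hf hg]

theorem gradient_fun_sub (hf : DifferentiableAt ℝ f x) (hg : DifferentiableAt ℝ g x) :
    gradient (fun y => f y - g y) x = gradient f x - gradient g x := by
  simp [gradient, fderiv_fun_sub hf hg]

theorem gradient_const_mul (hf : DifferentiableAt ℝ f x) (c : ℝ) :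
    gradient (fun y => c * f y) x = c • gradient f x := by
  simp [gradient, fderiv_const_mul hf]

theorem contDiff_norm_sq_gradient {m : ℕ} (hf : ContDiff ℝ (m + 1) f) :
    ContDiff ℝ m (fun y => ‖gradient f y‖ ^ 2) :=
  ((InnerProductSpace.toDual ℝ F).symm.toContinuousLinearEquiv.contDiff.comp
    (hf.fderiv_right le_rfl)).norm_sq ℝ

end Gradient

section PartialDerivatives

variable {N : ℕ} {f g : Eu N → ℝ} {x : Eu N}

theorem gradient_apply_eq_pd (f : Eu N → ℝ) (x : Eu N) (i : Fin N) :
    gradient f x i = pd f i x := by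
  have h : ⟪gradient f x, EuclideanSpace.single i 1⟫ = pd f i x :=
    InnerProductSpace.toDual_symm_apply
  rw [EuclideanSpace.inner_single_right] at h
  simpa using h

theorem inner_gradient_eq_sum_pd (f g : Eu N → ℝ) (x : Eu N) :
    ⟪gradient f x, gradient g x⟫ = ∑ i, pd f i x * pd g i x := by
  rw [PiLp.inner_apply]
  simp only [gradient_apply_eq_pd, RCLike.inner_apply, conj_trivial, mul_comm]

theorem norm_gradient_sq_eq_sum_pd_sq (f : Eu N → ℝ) (x : Eu N) :
    ‖gradient f x‖ ^ 2 = ∑ i, pd f i x ^ 2 := by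
  rw [← real_inner_self_eq_norm_sq, inner_gradient_eq_sum_pd]
  simp only [sq]

theorem pd_fun_add (hf : DifferentiableAt ℝ f x) (hg : DifferentiableAt ℝ g x) (i : Fin N) :
    pd (fun y => f y + g y) i x = pd f i x + pd g i x := by
  simp [pd, fderiv_fun_add hf hg]

theorem pd_const_mul (hf : DifferentiableAt ℝ f x) (c : ℝ) (i : Fin N) :
    pd (fun y => c * f y) i x = c * pd f i x := by
  simp [pd, fderiv_const_mul hf]

theorem pd_fun_mul (hf : DifferentiableAt ℝ f x) (hg : DifferentiableAt ℝ g x) (i : Fin N) :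
    pd (fun y => f y * g y) i x = f x * pd g i x + g x * pd f i x := by
  simp [pd, fderiv_fun_mul hf hg]

theorem pd_fun_sum {ι : Type*} (s : Finset ι) {f : ι → Eu N → ℝ}
    (hf : ∀ k ∈ s, DifferentiableAt ℝ (f k) x) (i : Fin N) :
    pd (fun y => ∑ k ∈ s, f k y) i x = ∑ k ∈ s, pd (f k) i x := by
  simp [pd, fderiv_fun_sum hf]

theorem contDiff_pd {m : ℕ} (hf : ContDiff ℝ (m + 1) f) (i : Fin N) :
    ContDiff ℝ m (pd f i) :=
  (ContinuousLinearMap.apply ℝ ℝ (EuclideanSpace.single i 1 : Eu N)).contDiff.comp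
    (hf.fderiv_right le_rfl)

theorem differentiable_pd (hf : ContDiff ℝ 2 f) (i : Fin N) :
    Differentiable ℝ (pd f i) :=
  (contDiff_pd (m := 1) hf i).differentiable one_ne_zero

theorem pd2_comm (hf : ContDiff ℝ 2 f) (i j : Fin N) (x : Eu N) :
    pd2 f i j x = pd2 f j i x := by
  have hf' : ContDiff ℝ 1 (fderiv ℝ f) := hf.fderiv_right (by norm_num)
  have hpd (k : Fin N) (y : Eu N) :
      HasFDerivAt (fun z => fderiv ℝ f z (EuclideanSpace.single k 1))
        ((ContinuousLinearMap.apply ℝ ℝ (EuclideanSpace.single k 1)).comp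
          (fderiv ℝ (fderiv ℝ f) y)) y :=
    (ContinuousLinearMap.apply ℝ ℝ (EuclideanSpace.single k 1 : Eu N)).hasFDerivAt.comp y
      (hf'.differentiable one_ne_zero y).hasFDerivAt
  simp only [pd2, pd]
  rw [(hpd j x).fderiv, (hpd i x).fderiv]
  exact second_derivative_symmetric (fun y => (hf.differentiable two_ne_zero y).hasFDerivAt)
    (hf'.differentiable one_ne_zero x).hasFDerivAt _ _

end PartialDerivatives

section Laplacian

variable {N : ℕ} {f g : Eu N → ℝ}

theorem pd2_fun_add (hf : ContDiff ℝ 2 f) (hg : ContDiff ℝ 2 g) (i j : Fin N) (x : Eu N) :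
    pd2 (fun y => f y + g y) i j x = pd2 f i j x + pd2 g i j x := by
  have h : pd (fun y => f y + g y) j = fun y => pd f j y + pd g j y := funext fun y =>
    pd_fun_add (hf.differentiable two_ne_zero y) (hg.differentiable two_ne_zero y) j
  rw [pd2, h, pd_fun_add (differentiable_pd hf j x) (differentiable_pd hg j x)]
  rfl

theorem pd2_const_mul (hf : ContDiff ℝ 2 f) (c : ℝ) (i j : Fin N) (x : Eu N) :
    pd2 (fun y => c * f y) i j x = c * pd2 f i j x := by
  have h : pd (fun y => c * f y) j = fun y => c * pd f j y := funext fun y =>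
    pd_const_mul (hf.differentiable two_ne_zero y) c j
  rw [pd2, h, pd_const_mul (differentiable_pd hf j x)]
  rfl

theorem pd2_fun_sum {ι : Type*} (s : Finset ι) {f : ι → Eu N → ℝ}
    (hf : ∀ k ∈ s, ContDiff ℝ 2 (f k)) (i j : Fin N) (x : Eu N) :
    pd2 (fun y => ∑ k ∈ s, f k y) i j x = ∑ k ∈ s, pd2 (f k) i j x := by
  have h : pd (fun y => ∑ k ∈ s, f k y) j = fun y => ∑ k ∈ s, pd (f k) j y := funext fun y =>
    pd_fun_sum s (fun k hk => (hf k hk).differentiable two_ne_zero y) j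
  rw [pd2, h, pd_fun_sum s (fun k hk => differentiable_pd (hf k hk) j x)]
  rfl

theorem pd2_fun_mul (hf : ContDiff ℝ 2 f) (hg : ContDiff ℝ 2 g) (i j : Fin N) (x : Eu N) :
    pd2 (fun y => f y * g y) i j x
      = f x * pd2 g i j x + pd f i x * pd g j x + pd f j x * pd g i x + g x * pd2 f i j x := by
  have hf1 := hf.differentiable two_ne_zero
  have hg1 := hg.differentiable two_ne_zero
  have h : pd (fun y => f y * g y) j = fun y => f y * pd g j y + g y * pd f j y :=
    funext fun y => pd_fun_mul (hf1 y) (hg1 y) j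
  rw [pd2, h, pd_fun_add (f := fun y => f y * pd g j y) (g := fun y => g y * pd f j y)
      ((hf1 x).mul (differentiable_pd hg j x)) ((hg1 x).mul (differentiable_pd hf j x)),
    pd_fun_mul (hf1 x) (differentiable_pd hg j x), pd_fun_mul (hg1 x) (differentiable_pd hf j x)]
  simp only [pd2]
  ring

theorem lap_fun_add (hf : ContDiff ℝ 2 f) (hg : ContDiff ℝ 2 g) (x : Eu N) :
    lap (fun y => f y + g y) x = lap f x + lap g x := by
  simp only [lap, pd2_fun_add hf hg, Finset.sum_add_distrib]

theorem lap_const_mul (hf : ContDiff ℝ 2 f) (c : ℝ) (x : Eu N) :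
    lap (fun y => c * f y) x = c * lap f x := by
  simp only [lap, pd2_const_mul hf, Finset.mul_sum]

theorem lap_fun_sum {ι : Type*} (s : Finset ι) {f : ι → Eu N → ℝ}
    (hf : ∀ k ∈ s, ContDiff ℝ 2 (f k)) (x : Eu N) :
    lap (fun y => ∑ k ∈ s, f k y) x = ∑ k ∈ s, lap (f k) x := by
  simp only [lap, pd2_fun_sum s hf]
  exact Finset.sum_comm

theorem lap_fun_mul (hf : ContDiff ℝ 2 f) (hg : ContDiff ℝ 2 g) (x : Eu N) :
    lap (fun y => f y * g y) x
      = f x * lap g x + 2 * ⟪gradient f x, gradient g x⟫ + g x * lap f x := by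
  simp only [lap, pd2_fun_mul hf hg, inner_gradient_eq_sum_pd, Finset.sum_add_distrib,
    ← Finset.mul_sum]
  ring

theorem lap_pd_eq_pd_lap (hf : ContDiff ℝ 3 f) (j : Fin N) (x : Eu N) :
    lap (pd f j) x = pd (lap f) j x := by
  have hf2 : ContDiff ℝ 2 f := hf.of_le (by norm_num)
  have hpd (i : Fin N) : ContDiff ℝ 2 (pd f i) := contDiff_pd hf i
  have hpd2 (i : Fin N) : Differentiable ℝ (pd2 f i i) := differentiable_pd (hpd i) i
  rw [lap, show lap f = fun y => ∑ i, pd2 f i i y from rfl,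
    pd_fun_sum _ (fun i _ => hpd2 i x)]
  refine Finset.sum_congr rfl fun i _ => ?_
  have hji : pd (pd f i) j = pd (pd f j) i := funext fun y => pd2_comm hf2 j i y
  calc pd2 (pd f j) i i x = pd (pd (pd f i) j) i x := by rw [hji]; rfl
    _ = pd2 (pd f i) i j x := rfl
    _ = pd2 (pd f i) j i x := pd2_comm (hpd i) i j x
    _ = pd (pd2 f i i) j x := rfl

theorem differentiable_lap (hf : ContDiff ℝ 3 f) : Differentiable ℝ (lap f) :=
  Differentiable.fun_sum fun i _ => differentiable_pd (contDiff_pd hf i) i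

theorem gradient_lap_sub_const_mul_add_const_mul (hf : ContDiff ℝ 3 f) (hg : ContDiff ℝ 2 g)
    (c d : ℝ) (x : Eu N) :
    gradient (fun y => lap f y - c * f y + d * g y) x
      = gradient (lap f) x - c • gradient f x + d • gradient g x := by
  have hΔf : DifferentiableAt ℝ (fun y => lap f y) x := differentiable_lap hf x
  have hf1 : DifferentiableAt ℝ f x := hf.differentiable (by norm_num) x
  have hg1 : DifferentiableAt ℝ g x := hg.differentiable two_ne_zero x
  rw [gradient_fun_add (f := fun y => lap f y - c * f y) (hΔf.sub (hf1.const_mul c))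
      (hg1.const_mul d),
    gradient_fun_sub hΔf (hf1.const_mul c), gradient_const_mul hf1, gradient_const_mul hg1]

theorem lap_norm_sq_gradient (hf : ContDiff ℝ 3 f) (x : Eu N) :
    lap (fun y => ‖gradient f y‖ ^ 2) x
      = 2 * (∑ i, ∑ j, pd2 f i j x ^ 2 + ⟪gradient f x, gradient (lap f) x⟫) := by
  have hpd (j : Fin N) : ContDiff ℝ 2 (pd f j) := contDiff_pd hf j
  have h : (fun y => ‖gradient f y‖ ^ 2) = fun y => ∑ j, pd f j y * pd f j y := funext fun y => by
    rw [norm_gradient_sq_eq_sum_pd_sq]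
    simp only [sq]
  rw [h, lap_fun_sum _ (fun j _ => (hpd j).mul (hpd j)), Finset.sum_comm,
    inner_gradient_eq_sum_pd, ← Finset.sum_add_distrib, Finset.mul_sum]
  refine Finset.sum_congr rfl fun j _ => ?_
  have hpd2 (i : Fin N) : pd2 f i j x = pd (pd f j) i x := rfl
  rw [lap_fun_mul (hpd j) (hpd j), inner_gradient_eq_sum_pd, lap_pd_eq_pd_lap hf]
  simp only [hpd2, sq]
  ring

theorem divg_smul_gradient {x : Eu N} (hf : DifferentiableAt ℝ f x) (hg : ContDiff ℝ 2 g) :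
    divg (fun y => f y • gradient g y) x = ⟪gradient f x, gradient g x⟫ + f x * lap g x := by
  have h (i : Fin N) : (fun y => (f y • gradient g y) i) = fun y => f y * pd g i y :=
    funext fun y => by simp [gradient_apply_eq_pd]
  change ∑ i, pd (fun y => (f y • gradient g y) i) i x = _
  simp only [h, pd_fun_mul hf (differentiable_pd hg _ x), Finset.sum_add_distrib,
    inner_gradient_eq_sum_pd, lap, pd2, Finset.mul_sum, mul_comm (pd g _ x)]
  ring

end Laplacian

theorem sq_lap_le_card_mul_sum_sq_pd2 {N : ℕ} (f : Eu N → ℝ) (x : Eu N) :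
    lap f x ^ 2 ≤ N * ∑ i, ∑ j, pd2 f i j x ^ 2 := by
  have hdiag : ∑ i, pd2 f i i x ^ 2 ≤ ∑ i, ∑ j, pd2 f i j x ^ 2 :=
    Finset.sum_le_sum fun i _ =>
      Finset.single_le_sum (f := fun j => pd2 f i j x ^ 2) (fun j _ => sq_nonneg _)
        (Finset.mem_univ i)
  calc lap f x ^ 2 ≤ N * ∑ i, pd2 f i i x ^ 2 := by
        simpa [lap] using sq_sum_le_card_mul_sum_sq (s := Finset.univ) (f := fun i => pd2 f i i x)
    _ ≤ N * ∑ i, ∑ j, pd2 f i j x ^ 2 := by gcongr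

theorem add_mul_add_mul_sq_nonneg_of_sq_le {n H S U m : ℝ} (hn : 0 ≤ n) (hH : 0 ≤ H)
    (h : S ^ 2 ≤ n * H) : 0 ≤ H + m * U * S + n * m ^ 2 * U ^ 2 / 4 := by
  rcases hn.eq_or_lt with rfl | hn
  · have hS : S = 0 := by nlinarith
    simp [hS, hH]
  · nlinarith [sq_nonneg (2 * S + n * m * U)]

theorem statement14_general (N : ℕ) (χ a b lam mu : ℝ)
    (hχ : 0 < χ) (hmu : 0 < mu)
    (u v : Eu N → ℝ → ℝ)
    (hru : ∀ t : ℝ, 0 < t → ContDiff ℝ 2 (fun x => u x t))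
    (hrv : ∀ t : ℝ, 0 < t → ContDiff ℝ 3 (fun x => v x t))
    (hpdeu : ∀ (x : Eu N) (t : ℝ), 0 < t →
      HasDerivAt (fun s => u x s)
        (lap (fun y => u y t) x
          - χ * divg (fun y => u y t • gradient (fun z => v z t) y) x
          + u x t * (a - b * u x t)) t)
    (hpdev : ∀ (x : Eu N) (t : ℝ), 0 < t →
      HasDerivAt (fun s => v x s)
        (lap (fun y => v y t) x - lam * v x t + mu * u x t) t)
    (hgv : ∀ (x : Eu N) (t : ℝ), 0 < t →
      HasDerivAt (fun s => gradient (fun y => v y s) x)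
        (gradient (fun y => deriv (fun s => v y s) t) x) t) :
    ∀ (x : Eu N) (t : ℝ), 0 < t →
      deriv (fun s => u x s + χ / (2 * mu) * ‖gradient (fun y => v y s) x‖ ^ 2) t ≤
        lap (fun y => u y t + χ / (2 * mu) * ‖gradient (fun z => v z t) y‖ ^ 2) x
          - χ * lam / mu * ‖gradient (fun y => v y t) x‖ ^ 2
          - (b - N * mu * χ / 4) * u x t ^ 2 + a * u x t := by
  intro x t ht
  have hU : ContDiff ℝ 2 (fun y => u y t) := hru t ht
  have hV : ContDiff ℝ 3 (fun y => v y t) := hrv t ht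
  have hV2 : ContDiff ℝ 2 (fun y => v y t) := hV.of_le (by norm_num)
  have hgrad_vt : gradient (fun y => deriv (fun s => v y s) t) x
      = gradient (lap fun y => v y t) x - lam • gradient (fun y => v y t) x
        + mu • gradient (fun y => u y t) x := by
    rw [← gradient_lap_sub_const_mul_add_const_mul hV hU]
    exact congrArg (gradient · x) (funext fun y => (hpdev y t ht).deriv)
  have hW : ContDiff ℝ 2 (fun y => ‖gradient (fun z => v z t) y‖ ^ 2) :=
    contDiff_norm_sq_gradient (m := 2) hV
  have hw : HasDerivAt (fun s => u x s + χ / (2 * mu) * ‖gradient (fun y => v y s) x‖ ^ 2) _ t :=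
    (hpdeu x t ht).add (((hgv x t ht).norm_sq).const_mul (χ / (2 * mu)))
  rw [hw.deriv, lap_fun_add hU (contDiff_const.mul hW), lap_const_mul hW, lap_norm_sq_gradient hV,
    divg_smul_gradient (hU.differentiable two_ne_zero x) hV2, hgrad_vt, inner_add_right,
    inner_sub_right, inner_smul_right, inner_smul_right, real_inner_self_eq_norm_sq,
    real_inner_comm (gradient (fun y => u y t) x)]
  have hsquare := add_mul_add_mul_sq_nonneg_of_sq_le (m := mu) (U := u x t) (Nat.cast_nonneg N)
    (Finset.sum_nonneg fun i _ => Finset.sum_nonneg fun j _ => sq_nonneg _)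
    (sq_lap_le_card_mul_sum_sq_pd2 (fun y => v y t) x)
  have hmu_inv : mu * mu⁻¹ = 1 := mul_inv_cancel₀ hmu.ne'
  linear_combination (χ / mu) * hsquare
    + χ * (⟪gradient (fun y => u y t) x, gradient (fun y => v y t) x⟫
      + u x t * lap (fun y => v y t) x + N * mu * u x t ^ 2 / 4) * hmu_inv

/-- without any relation between `b` and `Nμχ/4`, the quantity
`w = u + (χ/(2μ))|∇v|²` satisfies
`w_t ≤ Δw − (χλ/μ)|∇v|² − (b − Nμχ/4)u² + a u`. -/
theorem statement14 (N : ℕ) (hN : 1 ≤ N) (χ a b lam mu : ℝ)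
    (hχ : 0 < χ) (ha : 0 < a) (hb : 0 < b) (hlam : 0 < lam) (hmu : 0 < mu)
    (u v : Eu N → ℝ → ℝ)
    (hru : ∀ t : ℝ, 0 < t → ContDiff ℝ 2 (fun x => u x t))
    (hrv : ∀ t : ℝ, 0 < t → ContDiff ℝ 3 (fun x => v x t))
    (hpdeu : ∀ (x : Eu N) (t : ℝ), 0 < t →
      HasDerivAt (fun s => u x s)
        (lap (fun y => u y t) x
          - χ * divg (fun y => u y t • gradient (fun z => v z t) y) x
          + u x t * (a - b * u x t)) t)
    (hpdev : ∀ (x : Eu N) (t : ℝ), 0 < t →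
      HasDerivAt (fun s => v x s)
        (lap (fun y => v y t) x - lam * v x t + mu * u x t) t)
    (hgv : ∀ (x : Eu N) (t : ℝ), 0 < t →
      HasDerivAt (fun s => gradient (fun y => v y s) x)
        (gradient (fun y => deriv (fun s => v y s) t) x) t)
    (hgvc : ∀ x : Eu N, ContinuousOn
      (fun t : ℝ => gradient (fun y => deriv (fun s => v y s) t) x) (Set.Ioi 0)) :
    ∀ (x : Eu N) (t : ℝ), 0 < t →
      deriv (fun s => u x s + χ / (2 * mu) * ‖gradient (fun y => v y s) x‖ ^ 2) t ≤
        lap (fun y => u y t + χ / (2 * mu) * ‖gradient (fun z => v z t) y‖ ^ 2) x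
          - χ * lam / mu * ‖gradient (fun y => v y t) x‖ ^ 2
          - (b - N * mu * χ / 4) * u x t ^ 2 + a * u x t :=
  statement14_general N χ a b lam mu hχ hmu u v hru hrv hpdeu hpdev hgv
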